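/- arXiv:1903.07371 — 2 statements merged into one kernel-verified Lean document; each statement's English description precedes it below -/
import Mathlib

section
/- If T, T' are monotone operators on Pow(B) such that for every I ⊆ B, T(I) ⊆ T'(I) ⊆ T(I) ∪ H for a fixed finite set H ⊆ gfp(T), then gfp(T) = gfp(T'). -/
namespace OrderHom

variable {α : Type*} [CompleteLattice α]

/-- `gfp g ⊔ gfp f` is a post-fixed point of `f`: the defect `g x ≤ f x ⊔ gfp f` is absorbed by
`gfp f = f (gfp f)`. -/
theorem gfp_le_gfp_of_le_sup_gfp {f g : α →o α} (h : ∀ x, g x ≤ f x ⊔ f.gfp) :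
    g.gfp ≤ f.gfp := by
  have hpost : g.gfp ⊔ f.gfp ≤ f (g.gfp ⊔ f.gfp) := by
    refine sup_le ?_ (f.gfp_le_map le_sup_right)
    calc g.gfp = g g.gfp := g.map_gfp.symm
      _ ≤ f g.gfp ⊔ f.gfp := h _
      _ ≤ f (g.gfp ⊔ f.gfp) := sup_le (f.monotone le_sup_left) (f.gfp_le_map le_sup_right)
  exact le_sup_left.trans (f.le_gfp hpost)

theorem gfp_eq_of_le_of_le_sup {f g : α →o α} {a : α} (ha : a ≤ f.gfp) (hfg : f ≤ g)
    (hgf : ∀ x, g x ≤ f x ⊔ a) : f.gfp = g.gfp :=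
  le_antisymm (gfp.monotone hfg)
    (gfp_le_gfp_of_le_sup_gfp fun x => (hgf x).trans (sup_le_sup_left ha _))

end OrderHom

theorem stmt8_general {B : Type*} (T T' : Set B →o Set B) (H : Set B)
    (hH : H ⊆ OrderHom.gfp T)
    (h1 : ∀ I : Set B, T I ⊆ T' I) (h2 : ∀ I : Set B, T' I ⊆ T I ∪ H) :
    OrderHom.gfp T = OrderHom.gfp T' :=
  OrderHom.gfp_eq_of_le_of_le_sup hH h1 h2

theorem stmt8 {B : Type*} (T T' : Set B →o Set B) (H : Set B) (hfin : H.Finite)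
    (hH : H ⊆ OrderHom.gfp T)
    (h1 : ∀ I : Set B, T I ⊆ T' I) (h2 : ∀ I : Set B, T' I ⊆ T I ∪ H) :
    OrderHom.gfp T = OrderHom.gfp T' :=
  stmt8_general T T' H hH h1 h2
end

section
/- β-reduction with fix treated as a constant is strongly normalizing on simply-typed terms: if all terms are well-typed in the simply-typed lambda calculus extended with a constant fix (where fix-unfolding is not counted as a β-step), then there is no infinite sequence of one-step β-reductions. -/
/-- Simple types. -/
inductive Ty : Type
  | base : Ty
  | arrow : Ty → Ty → Ty

/-- Lambda terms (de Bruijn) extended with fixed-point terms `fix λx.M`. -/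
inductive Tm : Type
  | var : ℕ → Tm
  | app : Tm → Tm → Tm
  | lam : Ty → Tm → Tm
  | fixl : Ty → Tm → Tm

def liftR (f : ℕ → ℕ) : ℕ → ℕ
  | 0 => 0
  | n + 1 => f n + 1

def rename (f : ℕ → ℕ) : Tm → Tm
  | .var n => .var (f n)
  | .app a b => .app (rename f a) (rename f b)
  | .lam τ b => .lam τ (rename (liftR f) b)
  | .fixl τ b => .fixl τ (rename (liftR f) b)

def liftS (σ : ℕ → Tm) : ℕ → Tm
  | 0 => .var 0
  | n + 1 => rename Nat.succ (σ n)

def substTm (σ : ℕ → Tm) : Tm → Tm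
  | .var n => σ n
  | .app a b => .app (substTm σ a) (substTm σ b)
  | .lam τ b => .lam τ (substTm (liftS σ) b)
  | .fixl τ b => .fixl τ (substTm (liftS σ) b)

/-- `subst1 N M` is `M[x := N]` for the outermost bound variable. -/
def subst1 (N M : Tm) : Tm :=
  substTm (fun n => match n with | 0 => N | n + 1 => .var n) M

/-- One-step β-reduction, closed under all term contexts (including under `fix`);
fix-unfolding is *not* a reduction step. -/
inductive Step : Tm → Tm → Prop
  | beta (τ : Ty) (M N : Tm) : Step (.app (.lam τ M) N) (subst1 N M)
  | appL {M M' : Tm} (N : Tm) : Step M M' → Step (.app M N) (.app M' N)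
  | appR (M : Tm) {N N' : Tm} : Step N N' → Step (.app M N) (.app M N')
  | lam (τ : Ty) {M M' : Tm} : Step M M' → Step (.lam τ M) (.lam τ M')
  | fixl (τ : Ty) {M M' : Tm} : Step M M' → Step (.fixl τ M) (.fixl τ M')

/-- Typing rules; `fix λx.M : τ` whenever `Γ, x:τ ⊢ M : τ`. -/
inductive HasType : List Ty → Tm → Ty → Prop
  | var {Γ : List Ty} {n : ℕ} {τ : Ty} : Γ[n]? = some τ → HasType Γ (.var n) τ
  | app {Γ : List Ty} {M N : Tm} {τ σ : Ty} :
      HasType Γ M (.arrow τ σ) → HasType Γ N τ → HasType Γ (.app M N) σ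
  | lam {Γ : List Ty} {M : Tm} {τ σ : Ty} :
      HasType (τ :: Γ) M σ → HasType Γ (.lam τ M) (.arrow τ σ)
  | fixl {Γ : List Ty} {M : Tm} {τ : Ty} :
      HasType (τ :: Γ) M τ → HasType Γ (.fixl τ M) τ

/-!
Tait–Girard reducibility. Types are interpreted by reducibility candidates: predicates
containing only strongly normalizing terms, closed under reduction, and containing every
neutral (non-abstraction) term all of whose reducts they contain. Since fix-unfolding is not
a step, `fix λx.M` is neutral and its only reducts come from `M`; so it lies in every
candidate as soon as `M` is strongly normalizing, and the typing rule for `fix` is as harmless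
as a variable. The usual fundamental lemma then shows that every well-typed term is reducible,
hence strongly normalizing.
-/

lemma liftR_comp (f g : ℕ → ℕ) : liftR (f ∘ g) = liftR f ∘ liftR g := by
  funext n; cases n <;> rfl

lemma rename_rename (f g : ℕ → ℕ) (M : Tm) : rename f (rename g M) = rename (f ∘ g) M := by
  induction M generalizing f g <;> simp [rename, liftR_comp, *]

lemma liftS_comp_liftR (s : ℕ → Tm) (f : ℕ → ℕ) : liftS (s ∘ f) = liftS s ∘ liftR f := by
  funext n; cases n <;> rfl

lemma substTm_rename (s : ℕ → Tm) (f : ℕ → ℕ) (M : Tm) :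
    substTm s (rename f M) = substTm (s ∘ f) M := by
  induction M generalizing s f <;> simp [rename, substTm, liftS_comp_liftR, *]

lemma liftS_rename_comp (f : ℕ → ℕ) (s : ℕ → Tm) :
    liftS (rename f ∘ s) = rename (liftR f) ∘ liftS s := by
  funext n
  cases n with
  | zero => rfl
  | succ n => simp only [liftS, Function.comp_apply, rename_rename]; rfl

lemma rename_substTm (f : ℕ → ℕ) (s : ℕ → Tm) (M : Tm) :
    rename f (substTm s M) = substTm (rename f ∘ s) M := by
  induction M generalizing f s <;> simp [rename, substTm, liftS_rename_comp, *]

lemma liftS_substTm_comp (s₁ s₂ : ℕ → Tm) :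
    liftS (substTm s₁ ∘ s₂) = substTm (liftS s₁) ∘ liftS s₂ := by
  funext n
  cases n with
  | zero => rfl
  | succ n => simp only [liftS, Function.comp_apply, rename_substTm, substTm_rename]; rfl

lemma substTm_substTm (s₁ s₂ : ℕ → Tm) (M : Tm) :
    substTm s₁ (substTm s₂ M) = substTm (substTm s₁ ∘ s₂) M := by
  induction M generalizing s₁ s₂ <;> simp [substTm, liftS_substTm_comp, *]

lemma liftS_var : liftS Tm.var = Tm.var := by
  funext n; cases n <;> rfl

@[simp]
lemma substTm_var (M : Tm) : substTm Tm.var M = M := by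
  induction M <;> simp [substTm, liftS_var, *]

def consS (N : Tm) (s : ℕ → Tm) : ℕ → Tm
  | 0 => N
  | n + 1 => s n

lemma subst1_eq_substTm_consS (N M : Tm) : subst1 N M = substTm (consS N Tm.var) M :=
  congrArg (substTm · M) (funext fun n => by cases n <;> rfl)

lemma substTm_subst1 (s : ℕ → Tm) (N M : Tm) :
    substTm s (subst1 N M) = subst1 (substTm s N) (substTm (liftS s) M) := by
  simp only [subst1_eq_substTm_consS, substTm_substTm]
  congr 1
  funext n
  cases n with
  | zero => rfl
  | succ n => simp [substTm, liftS, consS, substTm_rename, Function.comp_def]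

lemma subst1_substTm_liftS (N : Tm) (s : ℕ → Tm) (M : Tm) :
    subst1 N (substTm (liftS s) M) = substTm (consS N s) M := by
  rw [subst1_eq_substTm_consS, substTm_substTm]
  congr 1
  funext n
  cases n with
  | zero => rfl
  | succ n => simp [liftS, consS, substTm_rename, Function.comp_def]

lemma Step.substTm {M M' : Tm} (h : Step M M') (s : ℕ → Tm) :
    Step (substTm s M) (substTm s M') := by
  induction h generalizing s with
  | beta τ B N => rw [substTm_subst1]; exact .beta τ _ _
  | appL N _ ih => exact .appL _ (ih s)
  | appR M _ ih => exact .appR _ (ih s)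
  | lam τ _ ih => exact .lam τ (ih (liftS s))
  | fixl τ _ ih => exact .fixl τ (ih (liftS s))

def SN (M : Tm) : Prop := Acc (flip Step) M

lemma SN.of_map (F : Tm → Tm) (hF : ∀ {M M'}, Step M M' → Step (F M) (F M')) {M : Tm}
    (h : SN (F M)) : SN M :=
  Subrelation.accessible (fun hs => hF hs) (InvImage.accessible F h)

lemma SN.of_app_left {M N : Tm} (h : SN (.app M N)) : SN M :=
  h.of_map (.app · N) (.appL N)

lemma SN.of_subst1 {N M : Tm} (h : SN (subst1 N M)) : SN M :=
  h.of_map (subst1 N) fun hs => by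
    simp only [subst1_eq_substTm_consS]; exact hs.substTm _

lemma SN.not_exists_chain {M : Tm} (h : SN M) :
    ¬ ∃ f : ℕ → Tm, f 0 = M ∧ ∀ n, Step (f n) (f (n + 1)) := by
  induction h with
  | intro M _ ih =>
    rintro ⟨f, rfl, hf⟩
    exact ih (f 1) (hf 0) ⟨(f <| · + 1), rfl, fun n => hf (n + 1)⟩

def Neutral : Tm → Prop
  | .lam _ _ => False
  | _ => True

structure IsCandidate (P : Tm → Prop) : Prop where
  sn {M : Tm} : P M → SN M
  step {M M' : Tm} : P M → Step M M' → P M'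
  of_neutral {M : Tm} : Neutral M → (∀ M', Step M M' → P M') → P M

lemma isCandidate_sn : IsCandidate SN where
  sn h := h
  step h hs := h.inv hs
  of_neutral _ h := ⟨_, h⟩

namespace IsCandidate

variable {P Q : Tm → Prop}

lemma var (hP : IsCandidate P) (n : ℕ) : P (.var n) :=
  hP.of_neutral trivial fun _ h => nomatch h

lemma fixl (hP : IsCandidate P) (τ : Ty) {B : Tm} (hB : SN B) : P (.fixl τ B) := by
  induction hB with
  | intro B _ ih =>
    refine hP.of_neutral trivial fun _ hs => ?_
    cases hs with
    | fixl _ hs => exact ih _ hs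

def Arrow (P Q : Tm → Prop) (M : Tm) : Prop := ∀ N, P N → Q (.app M N)

lemma app_neutral (hP : IsCandidate P) (hQ : IsCandidate Q) {M : Tm} (hM : Neutral M)
    (h : ∀ M', Step M M' → Arrow P Q M') {N : Tm} (hN : P N) : Q (.app M N) := by
  induction hP.sn hN with
  | intro N _ ih =>
    refine hQ.of_neutral trivial fun _ hs => ?_
    cases hs with
    | beta => exact hM.elim
    | appL _ hs => exact h _ hs N hN
    | appR _ hs => exact ih _ hs (hP.step hN hs)

lemma arrow (hP : IsCandidate P) (hQ : IsCandidate Q) : IsCandidate (Arrow P Q) where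
  sn hM := (hQ.sn (hM _ (hP.var 0))).of_app_left
  step hM hs N hN := hQ.step (hM N hN) (.appL N hs)
  of_neutral hM h _ hN := app_neutral hP hQ hM h hN

lemma app_lam (hP : IsCandidate P) (hQ : IsCandidate Q) (τ : Ty) {B : Tm}
    (hsub : ∀ N, P N → Q (subst1 N B)) (hB : SN B) {N : Tm} (hN : P N) :
    Q (.app (.lam τ B) N) := by
  induction hB generalizing N with
  | intro B _ ihB =>
    induction hP.sn hN with
    | intro N _ ihN =>
      refine hQ.of_neutral trivial fun _ hs => ?_
      cases hs with
      | beta => exact hsub N hN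
      | appL _ hs =>
        cases hs with
        | lam _ hs =>
          exact ihB _ hs (fun N' hN' => hQ.step (hsub N' hN') (hs.substTm _)) hN
      | appR _ hs => exact ihN _ hs (hP.step hN hs)

end IsCandidate

def Red : Ty → Tm → Prop
  | .base => SN
  | .arrow τ σ => IsCandidate.Arrow (Red τ) (Red σ)

lemma isCandidate_red : ∀ τ : Ty, IsCandidate (Red τ)
  | .base => isCandidate_sn
  | .arrow τ σ => (isCandidate_red τ).arrow (isCandidate_red σ)

def RedSubst (Γ : List Ty) (s : ℕ → Tm) : Prop :=
  ∀ n τ, Γ[n]? = some τ → Red τ (s n)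

lemma RedSubst.cons {Γ : List Ty} {s : ℕ → Tm} {τ : Ty} {N : Tm}
    (hN : Red τ N) (hs : RedSubst Γ s) : RedSubst (τ :: Γ) (consS N s) := by
  rintro (_ | n) τ' h
  · cases h; exact hN
  · exact hs n τ' h

lemma RedSubst.var (Γ : List Ty) : RedSubst Γ Tm.var :=
  fun n τ _ => (isCandidate_red τ).var n

lemma HasType.red_substTm {Γ : List Ty} {M : Tm} {τ : Ty} (h : HasType Γ M τ) {s : ℕ → Tm}
    (hs : RedSubst Γ s) : Red τ (substTm s M) := by
  induction h generalizing s with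
  | var h => exact hs _ _ h
  | app _ _ ihM ihN => exact ihM hs _ (ihN hs)
  | @lam _ _ τ σ _ ih =>
    have hsub : ∀ N, Red τ N → Red σ (subst1 N (substTm (liftS s) _)) := fun N hN => by
      rw [subst1_substTm_liftS]; exact ih (hs.cons hN)
    have hSN := ((isCandidate_red σ).sn (hsub _ ((isCandidate_red τ).var 0))).of_subst1
    exact fun _ => (isCandidate_red τ).app_lam (isCandidate_red σ) τ hsub hSN
  | @fixl _ _ τ _ ih =>
    refine (isCandidate_red τ).fixl τ (SN.of_subst1 (N := .var 0) ?_)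
    rw [subst1_substTm_liftS]
    exact (isCandidate_red τ).sn (ih (hs.cons ((isCandidate_red τ).var 0)))

lemma HasType.sn {Γ : List Ty} {M : Tm} {τ : Ty} (h : HasType Γ M τ) : SN M := by
  simpa using (isCandidate_red τ).sn (h.red_substTm (.var Γ))

theorem stmt16 (Γ : List Ty) (M : Tm) (τ : Ty) (h : HasType Γ M τ) :
    ¬ ∃ f : ℕ → Tm, f 0 = M ∧ ∀ n : ℕ, Step (f n) (f (n + 1)) :=
  h.sn.not_exists_chain
end
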